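/- Let g be a positive definite 2×2 Hermitian matrix (entries g^{\bar{m}ℓ}) and suppose that for all real x and complex z₂ in a neighborhood of 0 the inequality 2Re(z₂ g^{\bar{2}1}) + 2x g^{\bar{2}2} ≥ 0 holds, where g may depend continuously on (x, z₂). Then at the point x = 0, z₂ = 0 we must have g^{\bar{2}1} = 0 and g^{\bar{2}2} = 0, contradicting positive definiteness. Hence no positive definite Hermitian 2×2 matrix-valued continuous function g can satisfy 2Re(z₂ g^{\bar{2}1}(x,z₂)) + 2x g^{\bar{2}2}(x,z₂) ≥ 0 on a neighborhood of the origin. -/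

import Mathlib

open ComplexOrder

theorem diag_pos_aux (M : Matrix (Fin 2) (Fin 2) ℂ) (hM : M.PosDef) :
    0 < (M 1 1).re := by
  have h := hM.dotProduct_mulVec_pos (x := (Pi.single 1 1 : Fin 2 → ℂ)) (by simp [funext_iff, Pi.single_apply])
  have heq : dotProduct (star (Pi.single 1 1 : Fin 2 → ℂ)) (M.mulVec (Pi.single 1 1)) = M 1 1 := by
    simp [dotProduct, Matrix.mulVec, Fin.sum_univ_two, Pi.single_apply]
  rw [heq] at h
  exact (Complex.lt_def.mp h).1

/-- Key step of Proposition 6.1: no continuous family of positive definite Hermitian `2×2`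
matrices `g(x, z₂)` can satisfy `2Re(z₂ g^{2̄1}) + 2x g^{2̄2} ≥ 0` on a neighborhood of the
origin. -/
theorem stmt9 (g : ℝ × ℂ → Matrix (Fin 2) (Fin 2) ℂ)
    (hcont : Continuous g) (hpos : ∀ p, (g p).PosDef)
    (h : ∀ᶠ p in nhds ((0 : ℝ), (0 : ℂ)),
      0 ≤ 2 * (p.2 * g p 1 0).re + 2 * p.1 * (g p 1 1).re) :
    False := by
  have ht : Filter.Tendsto (fun x : ℝ => (x, (0 : ℂ))) (nhds 0) (nhds ((0:ℝ), (0:ℂ))) :=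
    (continuous_id.prodMk continuous_const).tendsto 0
  have h1 : ∀ᶠ x : ℝ in nhds 0,
      0 ≤ 2 * ((0:ℂ) * g (x, 0) 1 0).re + 2 * x * (g (x, 0) 1 1).re := ht.eventually h
  have contf : Continuous fun x : ℝ => (g (x, (0:ℂ)) 1 1).re :=
    Complex.continuous_re.comp
      (((hcont.comp (continuous_id.prodMk continuous_const)).matrix_elem 1 1))
  have hpos0 : 0 < (g ((0:ℝ), (0:ℂ)) 1 1).re := diag_pos_aux _ (hpos _)
  have h2 : ∀ᶠ x : ℝ in nhds 0, 0 < (g (x, (0:ℂ)) 1 1).re :=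
    (contf.tendsto 0).eventually (eventually_gt_nhds hpos0)
  have : ∃ x : ℝ, (0 ≤ 2 * ((0:ℂ) * g (x, 0) 1 0).re + 2 * x * (g (x, 0) 1 1).re ∧
      0 < (g (x, (0:ℂ)) 1 1).re) ∧ x ∈ Set.Iio (0:ℝ) :=
    (((h1.and h2).filter_mono nhdsWithin_le_nhds).and
      eventually_mem_nhdsWithin).exists
  obtain ⟨x, ⟨hx1, hx2⟩, hx3⟩ := this
  simp only [zero_mul, Complex.zero_re, zero_add] at hx1
  have hx : x < 0 := hx3
  nlinarith
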